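/- arXiv:1702.06849 — 3 statements merged into one kernel-verified Lean document; each statement's English description precedes it below -/
import Mathlib

section
/- Let K be a field and Δ a finite connected partially ordered set. Then the incidence algebra KΔ is a sincere algebra: there exists a finite-dimensional KΔ-module M that is indecomposable (not isomorphic to a direct sum of two nonzero modules) and sincere (equivalently, for the incidence algebra: e_a • M ≠ 0 for every a ∈ Δ, where e_a ∈ KΔ is the idempotent taking value 1 at (a,a) and 0 elsewhere). -/
open CategoryTheory CategoryTheory.Limits

/-- The comparability graph of a partially ordered set: two distinct elements are adjacent
iff they are comparable. -/
def comparabilityGraph (Δ : Type) [PartialOrder Δ] : SimpleGraph Δ where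
  Adj a b := a ≠ b ∧ (a ≤ b ∨ b ≤ a)
  symm := by
    constructor
    rintro a b ⟨h1, h2⟩
    exact ⟨h1.symm, h2.symm⟩
  loopless := by
    constructor
    rintro a ⟨h, -⟩
    exact h rfl

/-- A module is indecomposable if it is nonzero and has no nontrivial direct sum
decomposition (equivalently, no pair of complementary nonzero submodules). -/
def IsIndecomposableModule (A : Type) [Ring A] (M : Type) [AddCommGroup M] [Module A M] :
    Prop :=
  Nontrivial M ∧ ∀ N₁ N₂ : Submodule A M, IsCompl N₁ N₂ → N₁ = ⊥ ∨ N₂ = ⊥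

/-- The idempotent `e_a` of the incidence algebra: the function taking value `1` at `(a, a)`
and `0` elsewhere. -/
def pointIdempotent (K : Type) [Field K] (Δ : Type) [PartialOrder Δ] [DecidableEq Δ]
    (a : Δ) : IncidenceAlgebra K Δ :=
  ⟨fun b c => if b = a ∧ c = a then 1 else 0, by
    intro b c hbc
    try simp only []
    rw [if_neg]
    rintro ⟨rfl, rfl⟩
    exact hbc le_rfl⟩

open Finset
variable (K : Type) [Field K] (Δ : Type) [PartialOrder Δ] [Fintype Δ] [DecidableEq Δ]
  [LocallyFiniteOrder Δ]

/-- The constant representation: `K` at every vertex. -/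
def ConstRep := Δ → K

instance : AddCommGroup (ConstRep K Δ) := Pi.addCommGroup

instance : SMul (IncidenceAlgebra K Δ) (ConstRep K Δ) :=
  ⟨fun f v a => ∑ b, f a b * v b⟩

lemma ConstRep.smul_apply (f : IncidenceAlgebra K Δ) (v : ConstRep K Δ) (a : Δ) :
    (f • v) a = ∑ b, f a b * v b := rfl

instance : Module (IncidenceAlgebra K Δ) (ConstRep K Δ) where
  one_smul v := by
    funext a
    rw [ConstRep.smul_apply]
    simp [IncidenceAlgebra.one_apply, ite_mul, Finset.sum_ite_eq]
    exact (Finset.sum_ite_eq Finset.univ a (fun x => v x)).trans (if_pos (Finset.mem_univ a))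
  mul_smul f g v := by
    funext a
    rw [ConstRep.smul_apply]
    have : ∀ b : Δ, ((f * g) a b) * v b
        = ∑ x, (if x ∈ Icc a b then f a x * g x b else 0) * v b := by
      intro b
      simp only [ite_mul, zero_mul, Finset.sum_ite_mem, Finset.univ_inter,
        IncidenceAlgebra.mul_apply, Finset.sum_mul]
    rw [Finset.sum_congr rfl fun b _ => this b, Finset.sum_comm]
    rw [ConstRep.smul_apply]
    refine Finset.sum_congr rfl fun x _ => ?_
    rw [ConstRep.smul_apply, Finset.mul_sum]
    refine Finset.sum_congr rfl fun b _ => ?_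
    by_cases h : x ∈ Icc a b
    · rw [if_pos h, mul_assoc]
    · rw [if_neg h, zero_mul]
      rw [Finset.mem_Icc, not_and_or] at h
      rcases h with h | h
      · simp [IncidenceAlgebra.apply_eq_zero_of_not_le h f]
      · simp [IncidenceAlgebra.apply_eq_zero_of_not_le h g]
  smul_zero f := by
    funext a
    show (∑ b, f a b * (0 : Δ → K) b) = (0 : Δ → K) a
    simp
  smul_add f v w := by
    funext a
    show _ = (f • v) a + (f • w) a
    rw [ConstRep.smul_apply, ConstRep.smul_apply, ConstRep.smul_apply, ← Finset.sum_add_distrib]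
    exact Finset.sum_congr rfl fun b _ => by show f a b * (v b + w b) = _; ring
  add_smul f g v := by
    funext a
    show _ = (f • v) a + (g • v) a
    rw [ConstRep.smul_apply, ConstRep.smul_apply, ConstRep.smul_apply, ← Finset.sum_add_distrib]
    exact Finset.sum_congr rfl fun b _ => by
      rw [IncidenceAlgebra.add_apply, add_mul]
  zero_smul v := by
    funext a
    show (∑ b, (0 : IncidenceAlgebra K Δ) a b * v b) = (0 : Δ → K) a
    simp [IncidenceAlgebra.zero_apply]

set_option linter.unusedSectionVars false

/-- The delta function at a vertex. -/
def ConstRep.delta (a : Δ) : ConstRep K Δ := Pi.single a 1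

/-- The matrix unit `e_{ab}` for `a ≤ b`. -/
def shiftElem {a b : Δ} (_h : a ≤ b) : IncidenceAlgebra K Δ :=
  ⟨fun c d => if c = a ∧ d = b then 1 else 0, by
    rintro c d hcd
    rw [if_neg]
    rintro ⟨rfl, rfl⟩
    exact hcd _h⟩

/-- The central scalar `c · 1`. -/
def scalarElem (c : K) : IncidenceAlgebra K Δ :=
  ⟨fun x d => if x = d then c else 0, by
    intro x d hxd
    rw [if_neg]
    rintro rfl
    exact hxd le_rfl⟩

variable {K Δ}

lemma shiftElem_smul {a b : Δ} (h : a ≤ b) (v : ConstRep K Δ) :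
    shiftElem K Δ h • v = Pi.single a (v b) := by
  funext c
  rw [ConstRep.smul_apply]
  show (∑ d, (if c = a ∧ d = b then (1:K) else 0) * v d) = _
  by_cases hc : c = a
  · subst hc
    simp [Pi.single_apply]
    exact (Finset.sum_ite_eq' Finset.univ b (fun x => v x)).trans (if_pos (Finset.mem_univ b))
  · rw [Finset.sum_eq_zero fun d _ => by simp [hc], Pi.single_apply, if_neg (by
      rintro rfl; exact hc rfl)]

lemma scalarElem_smul (c : K) (v : ConstRep K Δ) :
    scalarElem K Δ c • v = fun a => c * v a := by
  funext a
  rw [ConstRep.smul_apply]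
  show (∑ d, (if a = d then c else 0) * v d) = _
  simp [ite_mul, Finset.sum_ite_eq]

lemma pointIdempotent_eq_shift (a : Δ) :
    pointIdempotent K Δ a = shiftElem K Δ (le_refl a) := rfl

lemma delta_apply (a c : Δ) : ConstRep.delta K Δ a c = if c = a then (1:K) else 0 :=
  Pi.single_apply ..

lemma delta_ne_zero (a : Δ) : ConstRep.delta K Δ a ≠ 0 := by
  intro h
  have := congrFun h a
  rw [delta_apply, if_pos rfl] at this
  exact one_ne_zero this

/-- Key lemma: if `v ∈ N`, `v b ≠ 0`, `a ≤ b`, then `δ_a ∈ N`. -/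
lemma delta_mem {N : Submodule (IncidenceAlgebra K Δ) (ConstRep K Δ)} {v : ConstRep K Δ}
    (hv : v ∈ N) {a b : Δ} (h : a ≤ b) (hb : v b ≠ 0) : ConstRep.delta K Δ a ∈ N := by
  have h1 : Pi.single a (v b) ∈ N := by
    rw [← shiftElem_smul h v]; exact N.smul_mem _ hv
  have h2 : scalarElem K Δ (v b)⁻¹ • (show ConstRep K Δ from Pi.single a (v b))
      = ConstRep.delta K Δ a := by
    rw [scalarElem_smul]
    funext c
    rw [delta_apply]
    by_cases hc : c = a <;> simp [Pi.single_apply, hc, inv_mul_cancel₀ hb]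
  rw [← h2]
  exact N.smul_mem _ h1

lemma constRep_finite : Module.Finite (IncidenceAlgebra K Δ) (ConstRep K Δ) := by
  classical
  refine ⟨⟨Finset.univ.image (ConstRep.delta K Δ), ?_⟩⟩
  rw [Finset.coe_image, Finset.coe_univ, Set.image_univ, eq_top_iff]
  rintro v -
  have hv : v = ∑ a, scalarElem K Δ (v a) • ConstRep.delta K Δ a := by
    obtain ⟨w, rfl⟩ : ∃ w : Δ → K, w = v := ⟨v, rfl⟩
    rename' w => v
    funext c
    refine Eq.trans ?_ (Finset.sum_apply (M := fun _ => K) c Finset.univ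
      (fun a => scalarElem K Δ (v a) • ConstRep.delta K Δ a)).symm
    have : ∀ a : Δ, (scalarElem K Δ (v a) • ConstRep.delta K Δ a) c
        = if c = a then v a else 0 := by
      intro a
      rw [scalarElem_smul]
      show v a * ConstRep.delta K Δ a c = _
      rw [delta_apply]
      by_cases hc : c = a <;> simp [hc]
    refine Eq.trans ?_ (Finset.sum_congr rfl fun a _ => this a).symm
    exact ((Finset.sum_ite_eq Finset.univ c v).trans (if_pos (Finset.mem_univ c))).symm
  rw [hv]
  exact Submodule.sum_mem _ fun a _ =>
    Submodule.smul_mem _ _ (Submodule.subset_span ⟨a, rfl⟩)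

lemma constRep_indecomposable (hconn : (comparabilityGraph Δ).Connected) :
    IsIndecomposableModule (IncidenceAlgebra K Δ) (ConstRep K Δ) := by
  have hne : Nonempty Δ := hconn.nonempty
  constructor
  · refine ⟨0, ConstRep.delta K Δ (Classical.arbitrary Δ), ?_⟩
    exact fun h => delta_ne_zero _ h.symm
  intro N₁ N₂ hcompl
  -- the support sets
  -- cover: each delta is in N₁ or N₂
  have cover : ∀ a : Δ, ConstRep.delta K Δ a ∈ N₁ ∨ ConstRep.delta K Δ a ∈ N₂ := by
    intro a
    have : ConstRep.delta K Δ a ∈ N₁ ⊔ N₂ := by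
      rw [hcompl.sup_eq_top]; trivial
    rw [Submodule.mem_sup] at this
    obtain ⟨y, hy, z, hz, hyz⟩ := this
    have hsum : y a + z a = 1 := by
      have := congrFun hyz a
      rw [delta_apply, if_pos rfl] at this
      exact this
    by_cases hy0 : y a = 0
    · right
      refine delta_mem hz (le_refl a) ?_
      intro hz0
      rw [hy0, hz0, add_zero] at hsum
      exact one_ne_zero hsum.symm
    · left
      exact delta_mem hy (le_refl a) hy0
  have disj : ∀ a : Δ, ConstRep.delta K Δ a ∈ N₁ → ConstRep.delta K Δ a ∈ N₂ → False := by
    intro a h1 h2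
    have : ConstRep.delta K Δ a ∈ N₁ ⊓ N₂ := ⟨h1, h2⟩
    rw [hcompl.inf_eq_bot, Submodule.mem_bot] at this
    exact delta_ne_zero a this
  -- downward closure
  have down : ∀ (N : Submodule (IncidenceAlgebra K Δ) (ConstRep K Δ)) {a b : Δ}, a ≤ b →
      ConstRep.delta K Δ b ∈ N → ConstRep.delta K Δ a ∈ N := by
    intro N a b hab hb
    refine delta_mem hb hab ?_
    rw [delta_apply, if_pos rfl]
    exact one_ne_zero
  -- support propagates along edges of the comparability graph
  have step : ∀ (N N' : Submodule (IncidenceAlgebra K Δ) (ConstRep K Δ)),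
      (∀ c : Δ, ConstRep.delta K Δ c ∈ N ∨ ConstRep.delta K Δ c ∈ N') →
      (∀ c : Δ, ConstRep.delta K Δ c ∈ N → ConstRep.delta K Δ c ∈ N' → False) →
      ∀ {a b : Δ}, (comparabilityGraph Δ).Adj a b →
      ConstRep.delta K Δ a ∈ N → ConstRep.delta K Δ b ∈ N := by
    rintro N N' hcov hdisj a b ⟨hne, hcomp⟩ ha
    rcases hcov b with hb | hb
    · exact hb
    · exfalso
      rcases hcomp with h | h
      · exact hdisj a ha (down N' h hb)
      · exact hdisj b (down N h ha) hb
  have reach : ∀ (N N' : Submodule (IncidenceAlgebra K Δ) (ConstRep K Δ)),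
      (∀ c : Δ, ConstRep.delta K Δ c ∈ N ∨ ConstRep.delta K Δ c ∈ N') →
      (∀ c : Δ, ConstRep.delta K Δ c ∈ N → ConstRep.delta K Δ c ∈ N' → False) →
      ∀ {a b : Δ}, ConstRep.delta K Δ a ∈ N → ConstRep.delta K Δ b ∈ N := by
    intro N N' hcov hdisj a b
    obtain ⟨w⟩ := hconn.preconnected a b
    induction w with
    | nil => exact id
    | cons h _ ih => exact fun ha => ih (step N N' hcov hdisj h ha)
  by_contra hcon
  push_neg at hcon
  obtain ⟨h1, h2⟩ := hcon
  obtain ⟨v₁, hv₁, hv₁0⟩ := Submodule.exists_mem_ne_zero_of_ne_bot h1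
  obtain ⟨v₂, hv₂, hv₂0⟩ := Submodule.exists_mem_ne_zero_of_ne_bot h2
  obtain ⟨a, ha⟩ := Function.ne_iff.mp (show v₁ ≠ (0 : Δ → K) from hv₁0)
  obtain ⟨b, hb⟩ := Function.ne_iff.mp (show v₂ ≠ (0 : Δ → K) from hv₂0)
  have hda : ConstRep.delta K Δ a ∈ N₁ := delta_mem hv₁ (le_refl a) ha
  have hdb : ConstRep.delta K Δ b ∈ N₂ := delta_mem hv₂ (le_refl b) hb
  exact disj b (reach N₁ N₂ cover disj hda) hdb

/-- The incidence algebra of a finite connected poset is a sincere algebra: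
it admits a finite-dimensional indecomposable module `M` which is sincere, i.e.
`e_a • M ≠ 0` for every point `a` of the poset. -/
theorem incidenceAlgebra_is_sincere (K : Type) [Field K]
    (Δ : Type) [PartialOrder Δ] [Fintype Δ] [DecidableEq Δ] [LocallyFiniteOrder Δ]
    (hconn : (comparabilityGraph Δ).Connected) :
    ∃ M : ModuleCat.{0} (IncidenceAlgebra K Δ),
      Module.Finite (IncidenceAlgebra K Δ) M ∧
      IsIndecomposableModule (IncidenceAlgebra K Δ) M ∧
      ∀ a : Δ, ∃ m : M, pointIdempotent K Δ a • m ≠ 0 := by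
  refine ⟨ModuleCat.of (IncidenceAlgebra K Δ) (ConstRep K Δ), constRep_finite,
    constRep_indecomposable hconn, ?_⟩
  intro a
  refine ⟨ConstRep.delta K Δ a, ?_⟩
  have key : pointIdempotent K Δ a • ConstRep.delta K Δ a = ConstRep.delta K Δ a := by
    rw [pointIdempotent_eq_shift, shiftElem_smul]
    rw [delta_apply, if_pos rfl]
    rfl
  rw [show (pointIdempotent K Δ a • (ConstRep.delta K Δ a : ConstRep K Δ)) = _ from key]
  exact delta_ne_zero a
end

section
/- Let K be a field and A a finite-dimensional K-algebra. If two bounded radical cochain complexes of finite-dimensional projective A-modules are homotopy equivalent, then they are isomorphic as complexes. (Hence every bounded complex of finite-dimensional projectives is homotopy equivalent to a radical complex that is unique up to isomorphism.) -/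
open CategoryTheory CategoryTheory.Limits

/-- The submodule `(rad A)·M` of a module `M`, where `rad A` is the Jacobson radical of `A`. -/
def radicalSMulTop (A : Type) [Ring A] (M : Type) [AddCommGroup M] [Module A M] :
    Submodule A M :=
  Submodule.span A {y : M | ∃ r ∈ (⊥ : Ideal A).jacobson, ∃ m : M, y = r • m}

/-- A cochain complex of `A`-modules is bounded if all but finitely many entries vanish. -/
def IsBoundedComplex (A : Type) [Ring A] (P : CochainComplex (ModuleCat.{0} A) ℤ) : Prop :=
  ∃ a b : ℤ, ∀ i : ℤ, (i < a ∨ b < i) → IsZero (P.X i)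

/-- All entries are finitely generated (= finite-dimensional, as `A` is a finite-dimensional
algebra) projective `A`-modules. -/
def HasFinDimProjEntries (A : Type) [Ring A] (P : CochainComplex (ModuleCat.{0} A) ℤ) : Prop :=
  ∀ i : ℤ, Module.Finite A (P.X i) ∧ Module.Projective A (P.X i)

/-- A complex is radical if each differential has image inside `(rad A)·(next entry)`. -/
def IsRadicalComplex (A : Type) [Ring A] (P : CochainComplex (ModuleCat.{0} A) ℤ) : Prop :=
  ∀ (i : ℤ) (x : P.X i), P.d i (i + 1) x ∈ radicalSMulTop A (P.X (i + 1))

/-! ### Auxiliary material -/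

section Aux

variable {A : Type} [Ring A] {M N : Type} [AddCommGroup M] [Module A M]
  [AddCommGroup N] [Module A N]

/-- The Jacobson radical of `A` absorbs multiplication on the right. -/
lemma jac_mul_mem_right {r : A} (hr : r ∈ (⊥ : Ideal A).jacobson) (a : A) :
    r * a ∈ (⊥ : Ideal A).jacobson := by
  exact Ideal.mul_mem_right a _ hr

/-- Induction principle for spans of sets closed under scalar multiplication:
the `smul` case is not needed. -/
lemma span_induction_smulClosed {S : Set M} (hS : ∀ (a : A), ∀ x ∈ S, a • x ∈ S)
    {p : M → Prop} (h0 : p 0) (hadd : ∀ x y, p x → p y → p (x + y))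
    (hgen : ∀ x ∈ S, p x) : ∀ x ∈ Submodule.span A S, p x := by
  have hsm : ∀ (a : A), ∀ x ∈ AddSubmonoid.closure S, a • x ∈ AddSubmonoid.closure S := by
    intro a x hx
    induction hx using AddSubmonoid.closure_induction with
    | mem y hy => exact AddSubmonoid.subset_closure (hS a y hy)
    | zero => simpa using (AddSubmonoid.closure S).zero_mem
    | add y z _ _ hy hz => rw [smul_add]; exact add_mem hy hz
  let T : Submodule A M :=
    { carrier := AddSubmonoid.closure S
      add_mem' := fun ha hb => add_mem ha hb
      zero_mem' := zero_mem _
      smul_mem' := fun a {x} hx => hsm a x hx }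
  have hcl : ∀ y, y ∈ AddSubmonoid.closure S → p y := by
    intro y hy
    induction hy using AddSubmonoid.closure_induction with
    | mem z hz => exact hgen z hz
    | zero => simpa using h0
    | add y z _ _ hy hz => exact hadd y z hy hz
  intro x hx
  have hleT : Submodule.span A S ≤ T := Submodule.span_le.2 AddSubmonoid.subset_closure
  exact hcl x (hleT hx)

/-- `J`-span of a set: the submodule spanned by `r • m` with `r` in the radical, `m ∈ T`. -/
def jspan (A : Type) [Ring A] {M : Type} [AddCommGroup M] [Module A M] (T : Set M) :
    Submodule A M :=
  Submodule.span A {y : M | ∃ r ∈ (⊥ : Ideal A).jacobson, ∃ m ∈ T, y = r • m}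

lemma jspan_gen_mem {T : Set M} {r : A} (hr : r ∈ (⊥ : Ideal A).jacobson) {m : M}
    (hm : m ∈ T) : r • m ∈ jspan A T :=
  Submodule.subset_span ⟨r, hr, m, hm, rfl⟩

lemma jspan_induction (T : Set M) {p : M → Prop} (h0 : p 0)
    (hadd : ∀ x y, p x → p y → p (x + y))
    (hgen : ∀ r ∈ (⊥ : Ideal A).jacobson, ∀ m ∈ T, p (r • m)) :
    ∀ x ∈ jspan A T, p x := by
  refine span_induction_smulClosed ?_ h0 hadd ?_
  · rintro a y ⟨r, hr, m, hm, rfl⟩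
    exact ⟨a * r, Ideal.mul_mem_left _ a hr, m, hm, smul_smul a r m⟩
  · rintro y ⟨r, hr, m, hm, rfl⟩
    exact hgen r hr m hm

lemma jspan_le_span (T : Set M) : jspan A T ≤ Submodule.span A T := by
  refine Submodule.span_le.2 ?_
  rintro y ⟨r, hr, m, hm, rfl⟩
  exact Submodule.smul_mem _ r (Submodule.subset_span hm)

lemma jspan_le_self (W : Submodule A M) : jspan A (W : Set M) ≤ W := by
  refine Submodule.span_le.2 ?_
  rintro y ⟨r, hr, m, hm, rfl⟩
  exact Submodule.smul_mem _ r hm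

lemma radicalSMulTop_eq_jspan_univ :
    radicalSMulTop A M = jspan A (Set.univ : Set M) := by
  unfold radicalSMulTop jspan
  congr 1
  ext y
  simp

/-- Linear maps send the radical submodule into the radical submodule. -/
lemma map_radicalSMulTop (φ : M →ₗ[A] N) {x : M} (hx : x ∈ radicalSMulTop A M) :
    φ x ∈ radicalSMulTop A N := by
  rw [radicalSMulTop_eq_jspan_univ] at hx ⊢
  refine jspan_induction (Set.univ : Set M) (p := fun x => φ x ∈ jspan A (Set.univ : Set N))
    ?_ ?_ ?_ x hx
  · show φ (0 : M) ∈ _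
    rw [map_zero]; exact zero_mem _
  · intro a b ha hb
    show φ (a + b) ∈ _
    rw [map_add]; exact add_mem ha hb
  · intro r hr m _
    show φ (r • m) ∈ _
    rw [map_smul]
    exact jspan_gen_mem hr (Set.mem_univ _)

/-- Every element of the `J`-step of a span lies in the `J`-span of the generators. -/
lemma jspan_of_span (T : Set M) {x : M} (hx : x ∈ jspan A ((Submodule.span A T : Submodule A M) : Set M)) :
    x ∈ jspan A T := by
  refine jspan_induction _ (zero_mem _) (fun a b ha hb => add_mem ha hb) ?_ x hx
  intro r hr m hm
  have key : ∀ m ∈ Submodule.span A T, ∀ r ∈ (⊥ : Ideal A).jacobson, r • m ∈ jspan A T := by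
    intro m hm
    induction hm using Submodule.span_induction with
    | mem y hy => exact fun r hr => jspan_gen_mem hr hy
    | zero => intro r _; rw [smul_zero]; exact zero_mem _
    | add y z _ _ hy hz =>
        intro r hr
        rw [smul_add]; exact add_mem (hy r hr) (hz r hr)
    | smul a y _ hy =>
        intro r hr
        rw [smul_smul]
        exact hy (r * a) (jac_mul_mem_right hr a)
  exact key m hm r hr

/-- Decomposition of elements of the `J`-span of `insert x₀ T`. -/
lemma jspan_insert {T : Set M} {x₀ z : M} (hz : z ∈ jspan A (insert x₀ T)) :
    ∃ t ∈ (⊥ : Ideal A).jacobson, ∃ y ∈ jspan A T, z = t • x₀ + y := by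
  refine jspan_induction (insert x₀ T)
    (p := fun z => ∃ t ∈ (⊥ : Ideal A).jacobson, ∃ y ∈ jspan A T, z = t • x₀ + y) ?_ ?_ ?_ z hz
  · exact ⟨0, zero_mem _, 0, zero_mem _, by simp⟩
  · rintro a b ⟨t, ht, y, hy, rfl⟩ ⟨t', ht', y', hy', rfl⟩
    refine ⟨t + t', add_mem ht ht', y + y', add_mem hy hy', ?_⟩
    rw [add_smul]; abel
  · rintro r hr m (rfl | hm)
    · exact ⟨r, hr, 0, zero_mem _, by simp⟩
    · exact ⟨0, zero_mem _, r • m, jspan_gen_mem hr hm, by simp⟩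

/-- **Noncommutative Nakayama**: a finitely generated submodule contained in its own
radical step is zero. -/
lemma nakayama_aux :
    ∀ (n : ℕ) (s : Finset M) (W : Submodule A M), s.card ≤ n →
      Submodule.span A (s : Set M) = W → W ≤ jspan A (W : Set M) → W = ⊥ := by
  intro n
  induction n with
  | zero =>
      intro s W hcard hspan _
      rw [Nat.le_zero, Finset.card_eq_zero] at hcard
      subst hcard
      simp only [Finset.coe_empty, Submodule.span_empty] at hspan
      exact hspan.symm
  | succ n ih =>
      classical
      intro s W hcard hspan hle
      rcases s.eq_empty_or_nonempty with rfl | ⟨x, hx⟩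
      · simp only [Finset.coe_empty, Submodule.span_empty] at hspan
        exact hspan.symm
      -- x is a generator
      have hxW : x ∈ W := hspan ▸ Submodule.subset_span (by exact_mod_cast hx)
      have hxJ : x ∈ jspan A ((s : Set M)) := by
        apply jspan_of_span
        rw [hspan]
        exact hle hxW
      have hins : (s : Set M) = insert x ((s.erase x : Finset M) : Set M) := by
        rw [← Finset.coe_insert, Finset.insert_erase hx]
      rw [hins] at hxJ
      obtain ⟨t, ht, y, hy, hxy⟩ := jspan_insert hxJ
      -- (1 - t) • x = y, and 1 - t is left invertible
      obtain ⟨u, hu⟩ := Ideal.exists_mul_sub_mem_of_sub_one_mem_jacobson (1 - t)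
        (by simpa using ((⊥ : Ideal A).jacobson.neg_mem ht))
      rw [Ideal.mem_bot, sub_eq_zero] at hu
      have hxy' : (1 - t) • x = y := by
        rw [sub_smul, one_smul]
        exact sub_eq_of_eq_add (hxy.trans (add_comm _ _))
      have hxJ' : x ∈ jspan A ((s.erase x : Finset M) : Set M) := by
        have huy : u • y ∈ jspan A ((s.erase x : Finset M) : Set M) :=
          Submodule.smul_mem _ u hy
        rw [← hxy', smul_smul, hu, one_smul] at huy
        exact huy
      have hxS' : x ∈ Submodule.span A ((s.erase x : Finset M) : Set M) :=
        jspan_le_span _ hxJ'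
      have hspan' : Submodule.span A ((s.erase x : Finset M) : Set M) = W := by
        rw [← hspan, hins, Submodule.span_insert_eq_span hxS']
      refine ih (s.erase x) W ?_ hspan' hle
      have := Finset.card_erase_of_mem hx
      omega

/-- The chain `jpow A M j` of submodules `J^j · M`. -/
def jpow (A : Type) [Ring A] (M : Type) [AddCommGroup M] [Module A M] : ℕ → Submodule A M
  | 0 => ⊤
  | (j + 1) => jspan A ((jpow A M j : Submodule A M) : Set M)

/-- A linear endomorphism with image in the radical submodule is nilpotent
(for Artinian Noetherian modules). -/
lemma isNilpotent_of_range_le_radical [IsArtinian A M] [IsNoetherian A M]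
    (ν : M →ₗ[A] M) (hν : ∀ x : M, ν x ∈ radicalSMulTop A M) : IsNilpotent ν := by
  have hmap : ∀ (j : ℕ) (x : M), x ∈ jpow A M j → ν x ∈ jpow A M (j + 1) := by
    intro j
    induction j with
    | zero =>
        intro x _
        have := hν x
        rw [radicalSMulTop_eq_jspan_univ] at this
        show ν x ∈ jspan A ((⊤ : Submodule A M) : Set M)
        rw [Submodule.top_coe]
        exact this
    | succ j ihj =>
        intro x hx
        refine jspan_induction ((jpow A M j : Submodule A M) : Set M)
          (p := fun x => ν x ∈ jpow A M (j + 2)) ?_ ?_ ?_ x hx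
        · show ν (0 : M) ∈ _
          rw [map_zero]; exact zero_mem _
        · intro a b ha hb
          show ν (a + b) ∈ _
          rw [map_add]; exact add_mem ha hb
        · intro r hr m hm
          show ν (r • m) ∈ _
          rw [map_smul]
          exact jspan_gen_mem hr (ihj m hm)
  have hpow : ∀ (j : ℕ) (x : M), (ν ^ j) x ∈ jpow A M j := by
    intro j
    induction j with
    | zero => intro x; trivial
    | succ j ihj =>
        intro x
        rw [pow_succ']
        exact hmap j _ (ihj x)
  -- the chain is antitone and stabilizes
  have hanti : ∀ j : ℕ, jpow A M (j + 1) ≤ jpow A M j := fun j => jspan_le_self _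
  have hmono : Antitone (jpow A M) := antitone_nat_of_succ_le hanti
  obtain ⟨n, hn⟩ := IsArtinian.monotone_stabilizes
    (⟨fun j => OrderDual.toDual (jpow A M j), fun a b hab => hmono hab⟩ :
      ℕ →o (Submodule A M)ᵒᵈ)
  have hstab : jpow A M n = jpow A M (n + 1) := hn (n + 1) (Nat.le_succ n)
  have hbot : jpow A M n = ⊥ := by
    obtain ⟨s, hs⟩ := IsNoetherian.noetherian (jpow A M n)
    exact nakayama_aux s.card s _ le_rfl hs (le_of_eq hstab)
  refine ⟨n, ?_⟩
  ext x
  have := hpow n x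
  rw [hbot, Submodule.mem_bot] at this
  simpa using this

end Aux

section Cat

lemma isIso_of_comp_comp {C : Type*} [Category C] {X Y : C} (a : X ⟶ Y) (b : Y ⟶ X)
    (h1 : IsIso (a ≫ b)) (h2 : IsIso (b ≫ a)) : IsIso a := by
  have ha : a ≫ (b ≫ inv (a ≫ b)) = 𝟙 X := by
    rw [← Category.assoc]; exact IsIso.hom_inv_id _
  refine ⟨b ≫ inv (a ≫ b), ha, ?_⟩
  calc (b ≫ inv (a ≫ b)) ≫ a
      = inv (b ≫ a) ≫ ((b ≫ a) ≫ ((b ≫ inv (a ≫ b)) ≫ a)) := by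
        rw [← Category.assoc, ← Category.assoc, IsIso.inv_hom_id, Category.id_comp]
    _ = inv (b ≫ a) ≫ (b ≫ (a ≫ (b ≫ inv (a ≫ b))) ≫ a) := by
        simp only [Category.assoc]
    _ = 𝟙 Y := by rw [ha]; simp

/-- If a chain endomorphism of a radical complex with finitely generated entries is homotopic
to the identity, then each of its components is an isomorphism. -/
lemma isIso_f_of_homotopy_id (A : Type) [Ring A] [IsNoetherianRing A] [IsArtinianRing A]
    (R : CochainComplex (ModuleCat.{0} A) ℤ) (hpR : HasFinDimProjEntries A R)
    (hrR : IsRadicalComplex A R) {φ : R ⟶ R} (H : Homotopy φ (𝟙 R)) (i : ℤ) :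
    IsIso (φ.f i) := by
  haveI : Module.Finite A (R.X i) := (hpR i).1
  haveI : IsNoetherian A (R.X i) := inferInstance
  haveI : IsArtinian A (R.X i) := isArtinian_of_fg_of_artinian'
  have hrR' : ∀ (a b : ℤ), (ComplexShape.up ℤ).Rel a b → ∀ (x : R.X a),
      R.d a b x ∈ radicalSMulTop A (R.X b) := by
    intro a b hab x
    have hab' : a + 1 = b := hab
    subst hab'
    exact hrR a x
  set ν : R.X i ⟶ R.X i := dNext i H.hom + prevD i H.hom with hνdef
  have hmem : ∀ x : R.X i, ν x ∈ radicalSMulTop A (R.X i) := by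
    intro x
    have h1 : (dNext i H.hom) x ∈ radicalSMulTop A (R.X i) := by
      rw [dNext_eq H.hom (show (ComplexShape.up ℤ).Rel i (i + 1) from rfl)]
      show (H.hom (i + 1) i) ((R.d i (i + 1)) x) ∈ _
      exact map_radicalSMulTop (H.hom (i + 1) i).hom (hrR i x)
    have h2 : (prevD i H.hom) x ∈ radicalSMulTop A (R.X i) := by
      rw [prevD_eq H.hom (show (ComplexShape.up ℤ).Rel (i - 1) i from by
        show i - 1 + 1 = i; omega)]
      show (R.d (i - 1) i) ((H.hom i (i - 1)) x) ∈ _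
      exact hrR' (i - 1) i (by show i - 1 + 1 = i; omega) _
    show (dNext i H.hom + prevD i H.hom) x ∈ _
    show (dNext i H.hom) x + (prevD i H.hom) x ∈ _
    exact add_mem h1 h2
  let ν' : (R.X i : Type) →ₗ[A] (R.X i : Type) := ν.hom
  have hnil : IsNilpotent ν' := isNilpotent_of_range_le_radical ν' hmem
  have hunit : IsUnit (ν' + 1) := hnil.isUnit_add_one
  obtain ⟨w, hw1, hw2⟩ := isUnit_iff_exists.mp hunit
  have hcomm : φ.f i = ν + 𝟙 (R.X i) := by
    rw [hνdef]
    simpa using H.comm i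
  rw [hcomm]
  refine ⟨ModuleCat.ofHom w, ?_, ?_⟩
  · refine ModuleCat.hom_ext ?_
    show w * (ν' + 1) = (1 : Module.End A (R.X i))
    exact hw2
  · refine ModuleCat.hom_ext ?_
    show (ν' + 1) * w = (1 : Module.End A (R.X i))
    exact hw1

end Cat

/-- Over a finite-dimensional algebra `A`, two homotopy equivalent bounded
radical cochain complexes of finite-dimensional projective `A`-modules are isomorphic as
complexes. -/
theorem radical_complexes_homotopyEquiv_iso (K : Type) [Field K]
    (A : Type) [Ring A] [Algebra K A] [FiniteDimensional K A]
    (P Q : CochainComplex (ModuleCat.{0} A) ℤ)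
    (hbP : IsBoundedComplex A P) (hpP : HasFinDimProjEntries A P)
    (hrP : IsRadicalComplex A P)
    (hbQ : IsBoundedComplex A Q) (hpQ : HasFinDimProjEntries A Q)
    (hrQ : IsRadicalComplex A Q)
    (h : Nonempty (HomotopyEquiv P Q)) :
    Nonempty (P ≅ Q) := by
  obtain ⟨e⟩ := h
  haveI : IsNoetherianRing A := isNoetherian_of_tower K (inferInstance : IsNoetherian K A)
  haveI : IsArtinian K A := isArtinian_of_fg_of_artinian'
  haveI : IsArtinianRing A := isArtinian_of_tower K (inferInstance : IsArtinian K A)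
  have h1 : ∀ i, IsIso ((e.hom ≫ e.inv).f i) := fun i =>
    isIso_f_of_homotopy_id A P hpP hrP e.homotopyHomInvId i
  have h2 : ∀ i, IsIso ((e.inv ≫ e.hom).f i) := fun i =>
    isIso_f_of_homotopy_id A Q hpQ hrQ e.homotopyInvHomId i
  haveI : ∀ i, IsIso (e.hom.f i) := by
    intro i
    have h1' := h1 i
    have h2' := h2 i
    rw [HomologicalComplex.comp_f] at h1' h2'
    exact isIso_of_comp_comp _ _ h1' h2'
  haveI : IsIso e.hom := HomologicalComplex.Hom.isIso_of_components e.hom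
  exact ⟨asIso e.hom⟩
end

section
/- Let K be an algebraically closed field, A a finite-dimensional K-algebra, and M a nonzero indecomposable finite-dimensional A-module that is directed. Then End_A(M) ≅ K; that is, every A-module endomorphism of M is a scalar multiple of the identity. -/
open CategoryTheory CategoryTheory.Limits

/-- `M` lies on a cycle: there is a sequence `N₀ → N₁ → ⋯ → N_t ≅ N₀` (`t ≥ 1`) of nonzero
non-isomorphism homomorphisms between indecomposable finite-dimensional `A`-modules such
that `M` is isomorphic to one of the `Nᵢ`. -/
def LiesOnCycle (A : Type) [Ring A] (M : ModuleCat.{0} A) : Prop :=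
  ∃ (t : ℕ) (_ : 1 ≤ t) (N : Fin (t + 1) → ModuleCat.{0} A)
    (f : ∀ i : Fin t, N i.castSucc ⟶ N i.succ),
    (∀ i : Fin (t + 1), Module.Finite A (N i) ∧ IsIndecomposableModule A (N i)) ∧
    (∀ i : Fin t, f i ≠ 0 ∧ ¬ CategoryTheory.IsIso (f i)) ∧
    Nonempty (N (Fin.last t) ≅ N 0) ∧
    ∃ s : Fin (t + 1), Nonempty (N s ≅ M)

/-- An indecomposable finite-dimensional module is directed if it does not lie on any
cycle. -/
def IsDirectedModule (A : Type) [Ring A] (M : ModuleCat.{0} A) : Prop :=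
  ¬ LiesOnCycle A M

/-- Over an algebraically closed field, a nonzero indecomposable directed
finite-dimensional module over a finite-dimensional algebra has endomorphism ring `K`: every
endomorphism is a scalar multiple of the identity. -/
theorem end_of_directed_module (K : Type) [Field K] [IsAlgClosed K]
    (A : Type) [Ring A] [Algebra K A] [FiniteDimensional K A]
    (M : ModuleCat.{0} A) (hM : Nontrivial M) (hfd : Module.Finite A M)
    (hind : IsIndecomposableModule A M) (hdir : IsDirectedModule A M) :
    ∀ φ : M ⟶ M, ∃ c : K, ∀ m : M, φ m = algebraMap K A c • m := by
  intro φ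
  letI : Module K M := Module.compHom M (algebraMap K A)
  have hkm : ∀ (k : K) (m : M), k • m = algebraMap K A k • m := fun _ _ => rfl
  haveI : IsScalarTower K A M :=
    ⟨fun k a m => by
      rw [Algebra.smul_def, mul_smul]
      exact congrArg (· • a • m) rfl |>.trans (hkm k (a • m)).symm⟩
  haveI : FiniteDimensional K M := Module.Finite.trans A M
  -- φ as a K-linear endomorphism
  let ψ : Module.End K M :=
    { toFun := φ
      map_add' := map_add φ.hom
      map_smul' := fun k m => by
        simp only [RingHom.id_apply, hkm]
        exact map_smul φ.hom (algebraMap K A k) m }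
  obtain ⟨c, hc⟩ := Module.End.exists_eigenvalue ψ
  obtain ⟨m₀, hv⟩ := hc.exists_hasEigenvector
  refine ⟨c, ?_⟩
  -- the A-linear map L = φ - c • id
  let L : M ⟶ M := ModuleCat.ofHom
    { toFun := fun m => φ m - algebraMap K A c • m
      map_add' := fun x y => by
        simp only [map_add, smul_add]; abel
      map_smul' := fun a m => by
        simp only [RingHom.id_apply, map_smul, smul_sub]
        congr 1
        rw [← mul_smul, ← mul_smul, Algebra.commutes] }
  have hL0 : L m₀ = 0 := by
    have : ψ m₀ = c • m₀ := hv.apply_eq_smul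
    show φ m₀ - algebraMap K A c • m₀ = 0
    rw [← hkm, sub_eq_zero]
    exact this
  have hLnotiso : ¬ IsIso L := by
    intro hiso
    have : Function.Injective L := by
      have := (CategoryTheory.asIso L).toLinearEquiv.injective
      exact this
    exact hv.2 (this (by rw [hL0, map_zero]))
  by_cases hLz : L = 0
  · intro m
    have : L m = 0 := by rw [hLz]; rfl
    have : φ m - algebraMap K A c • m = 0 := this
    exact sub_eq_zero.mp this
  · exfalso
    apply hdir
    refine ⟨1, le_refl 1, fun _ => M, fun _ => L, fun _ => ⟨hfd, hind⟩,
      fun _ => ⟨hLz, hLnotiso⟩, ⟨Iso.refl M⟩, ⟨0, ⟨Iso.refl M⟩⟩⟩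
end
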